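/- arXiv:1404.2516 — 12 statements merged into one kernel-verified Lean document; each statement's English description precedes it below -/
import Mathlib

section
/- If (A, m, α) is a hom-algebra over a commutative ring R and β : A → A is a linear map satisfying β(m(x,y)) = m(β(x), β(y)) for all x, y (a weak morphism), then (A, β∘m, β∘α) is hom-associative whenever (A, m, α) is hom-associative; that is, if m(α(x), m(y,z)) = m(m(x,y), α(z)) for all x,y,z, then (β∘m)((β∘α)(x), (β∘m)(y,z)) = (β∘m)((β∘m)(x,y), (β∘α)(z)) for all x,y,z. -/
/-- Twisting a hom-associative algebra by a weak morphism yields a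
hom-associative algebra. -/
theorem hom_assoc_twist
    {R A : Type*} [CommRing R] [AddCommGroup A] [Module R A]
    (m : A →ₗ[R] A →ₗ[R] A) (α β : A →ₗ[R] A)
    (hβ : ∀ x y : A, β (m x y) = m (β x) (β y))
    (hassoc : ∀ x y z : A, m (α x) (m y z) = m (m x y) (α z)) :
    ∀ x y z : A,
      β (m (β (α x)) (β (m y z))) = β (m (β (m x y)) (β (α z))) := by
  intro x y z
  rw [← hβ, ← hβ, hassoc]
end

section
/- If (A, m, α) is a hom-Lie algebra (i.e., m(x,x)=0 for all x, and the hom-Jacobi identity m(α(x), m(y,z)) + m(α(y), m(z,x)) + m(α(z), m(x,y)) = 0 holds) and β : A → A is a weak morphism, then (A, β∘m, β∘α) is also a hom-Lie algebra. -/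
/-- Twisting a hom-Lie algebra by a weak morphism yields a hom-Lie algebra. -/
theorem hom_lie_twist
    {R A : Type*} [CommRing R] [AddCommGroup A] [Module R A]
    (m : A →ₗ[R] A →ₗ[R] A) (α β : A →ₗ[R] A)
    (hβ : ∀ x y : A, β (m x y) = m (β x) (β y))
    (halt : ∀ x : A, m x x = 0)
    (hjac : ∀ x y z : A,
      m (α x) (m y z) + m (α y) (m z x) + m (α z) (m x y) = 0) :
    (∀ x : A, β (m x x) = 0) ∧
    (∀ x y z : A,
      β (m (β (α x)) (β (m y z))) + β (m (β (α y)) (β (m z x))) +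
        β (m (β (α z)) (β (m x y))) = 0) := by
  refine ⟨fun x => by rw [halt, map_zero], fun x y z => ?_⟩
  simp only [← hβ, ← map_add, hjac, map_zero]
end

section
/- Let (A, m) be an associative algebra over a commutative ring R and β : A → A an algebra endomorphism. Then (A, β∘m, β) is a multiplicative hom-associative algebra: (β∘m)(β(x), (β∘m)(y,z)) = (β∘m)((β∘m)(x,y), β(z)) and β((β∘m)(x,y)) = (β∘m)(β(x), β(y)) for all x,y,z ∈ A. -/
/-- An associative algebra twisted by an algebra endomorphism β gives a
multiplicative hom-associative algebra (A, β∘m, β). -/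
theorem assoc_twist_hom_assoc
    {R A : Type*} [CommRing R] [AddCommGroup A] [Module R A]
    (m : A →ₗ[R] A →ₗ[R] A) (β : A →ₗ[R] A)
    (hassoc : ∀ x y z : A, m x (m y z) = m (m x y) z)
    (hβ : ∀ x y : A, β (m x y) = m (β x) (β y)) :
    (∀ x y z : A, β (m (β x) (β (m y z))) = β (m (β (m x y)) (β z))) ∧
    (∀ x y : A, β (β (m x y)) = β (m (β x) (β y))) :=
  ⟨fun x y z => by rw [hβ y z, hβ x y, hassoc], fun x y => by rw [hβ x y]⟩
end

section
/- Let (A, m, α) be a multiplicative hom-associative algebra in which α is bijective with linear inverse α⁻¹. Then the multiplication m' := α⁻¹ ∘ m is associative: m'(x, m'(y,z)) = m'(m'(x,y), z) for all x,y,z ∈ A. -/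
open Function

theorem map_op_of_leftInverse_of_map_op {A : Type*} (op : A → A → A) {f g : A → A}
    (hl : LeftInverse g f) (hr : RightInverse g f)
    (hf : ∀ x y, f (op x y) = op (f x) (f y)) (x y : A) :
    g (op x y) = op (g x) (g y) :=
  hl.injective <| by rw [hf, hr, hr, hr]

/-- In a multiplicative hom-associative algebra with invertible α, the
multiplication α⁻¹ ∘ m is associative. -/
theorem inv_twist_assoc
    {R A : Type*} [CommRing R] [AddCommGroup A] [Module R A]
    (m : A →ₗ[R] A →ₗ[R] A) (α αinv : A →ₗ[R] A)
    (hinv₁ : ∀ x : A, αinv (α x) = x)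
    (hinv₂ : ∀ x : A, α (αinv x) = x)
    (hassoc : ∀ x y z : A, m (α x) (m y z) = m (m x y) (α z))
    (hmult : ∀ x y : A, α (m x y) = m (α x) (α y)) :
    ∀ x y z : A,
      αinv (m x (αinv (m y z))) = αinv (m (αinv (m x y)) z) := by
  have hinv_mult : ∀ x y : A, αinv (m x y) = m (αinv x) (αinv y) :=
    map_op_of_leftInverse_of_map_op (fun a b => m a b) hinv₁ hinv₂ hmult
  intro x y z
  congr 1
  calc m x (αinv (m y z)) = m (α (αinv x)) (m (αinv y) (αinv z)) := by
        rw [hinv₂, hinv_mult]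
    _ = m (m (αinv x) (αinv y)) (α (αinv z)) := hassoc _ _ _
    _ = m (αinv (m x y)) z := by rw [hinv₂, hinv_mult]
end

section
/- Let (A, m, α) be a hom-associative algebra that possesses a classical two-sided unit e, i.e., m(e,x) = x = m(x,e) for all x ∈ A. Then for all x, y ∈ A: m(α(x), y) = m(x, α(y)) = α(m(x,y)). -/
/-! Putting `e` into two of the three slots of hom-associativity shows that multiplying by
`α e` on either side is `α`; putting it into one slot then moves `α` across the product. -/

section HomAssoc

variable {A : Type*} (m : A → A → A) (α : A → A)

theorem mul_map_unit_of_homAssoc (hassoc : ∀ x y z, m (α x) (m y z) = m (m x y) (α z))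
    {e : A} (he : ∀ x, m x e = x) (w : A) : m w (α e) = α w := by
  simpa only [he] using (hassoc w e e).symm

theorem map_unit_mul_of_homAssoc (hassoc : ∀ x y z, m (α x) (m y z) = m (m x y) (α z))
    {e : A} (he : ∀ x, m e x = x) (w : A) : m (α e) w = α w := by
  simpa only [he] using hassoc e e w

theorem mul_map_right_of_homAssoc (hassoc : ∀ x y z, m (α x) (m y z) = m (m x y) (α z))
    {e : A} (he : ∀ x, m e x = x) (x y : A) : m x (α y) = α (m x y) := by
  simpa only [he, map_unit_mul_of_homAssoc m α hassoc he] using (hassoc e x y).symm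

theorem mul_map_left_of_homAssoc (hassoc : ∀ x y z, m (α x) (m y z) = m (m x y) (α z))
    {e : A} (he : ∀ x, m x e = x) (x y : A) : m (α x) y = α (m x y) := by
  simpa only [he, mul_map_unit_of_homAssoc m α hassoc he] using hassoc x y e

end HomAssoc

/-- In a hom-associative algebra with a classical two-sided unit, α lies in
the centroid. -/
theorem unital_hom_assoc_centroid
    {R A : Type*} [CommRing R] [AddCommGroup A] [Module R A]
    (m : A →ₗ[R] A →ₗ[R] A) (α : A →ₗ[R] A)
    (hassoc : ∀ x y z : A, m (α x) (m y z) = m (m x y) (α z))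
    (e : A) (he₁ : ∀ x : A, m e x = x) (he₂ : ∀ x : A, m x e = x) :
    ∀ x y : A, m (α x) y = m x (α y) ∧ m x (α y) = α (m x y) := by
  intro x y
  have hright := mul_map_right_of_homAssoc (fun a b => m a b) α hassoc he₁ x y
  have hleft := mul_map_left_of_homAssoc (fun a b => m a b) α hassoc he₂ x y
  exact ⟨hleft.trans hright.symm, hright⟩
end

section
/- In a hom-associative algebra with classical unit e (so m(e,x)=x=m(x,e)), the map α lies in the centroid and moreover any product of elements containing α in any factor can be 'moved': m(α(x), m(y,z)) = α(m(x, m(y,z))) = m(m(x,y), α(z)) for all x,y,z. -/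
/-!
Specialising hom-associativity at the unit gives `m (α x) z = m x (α z)` (take `y = e`) and
`α (m x y) = m (α e) (m x y) = m x (α y)` (take `x = e`, then use the first identity with
`x = e`). Together these say that `α` lies in the centroid, and the three-factor statement
is the centroid property applied to the product `m x (m y z)`, followed by hom-associativity.
-/

section HomAssocUnit

variable {A : Type*} {m : A → A → A} {α : A → A} {e : A}

theorem hom_assoc_alpha_left_eq_right
    (hassoc : ∀ x y z, m (α x) (m y z) = m (m x y) (α z))
    (he₁ : ∀ x, m e x = x) (he₂ : ∀ x, m x e = x) (x z : A) :
    m (α x) z = m x (α z) := by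
  simpa only [he₁, he₂] using hassoc x e z

theorem hom_assoc_alpha_apply_mul_eq_mul_alpha
    (hassoc : ∀ x y z, m (α x) (m y z) = m (m x y) (α z))
    (he₁ : ∀ x, m e x = x) (he₂ : ∀ x, m x e = x) (x y : A) :
    α (m x y) = m x (α y) :=
  calc α (m x y) = m (α e) (m x y) := by
        rw [hom_assoc_alpha_left_eq_right hassoc he₁ he₂, he₁]
    _ = m x (α y) := by simpa only [he₁] using hassoc e x y

theorem hom_assoc_alpha_apply_mul_eq_alpha_mul
    (hassoc : ∀ x y z, m (α x) (m y z) = m (m x y) (α z))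
    (he₁ : ∀ x, m e x = x) (he₂ : ∀ x, m x e = x) (x y : A) :
    α (m x y) = m (α x) y :=
  (hom_assoc_alpha_apply_mul_eq_mul_alpha hassoc he₁ he₂ x y).trans
    (hom_assoc_alpha_left_eq_right hassoc he₁ he₂ x y).symm

end HomAssocUnit

/-- In a hom-associative algebra with classical unit, α is in the centroid and
applications of α can be moved around freely in products. -/
theorem unital_hom_assoc_alpha_moves
    {R A : Type*} [CommRing R] [AddCommGroup A] [Module R A]
    (m : A →ₗ[R] A →ₗ[R] A) (α : A →ₗ[R] A)
    (hassoc : ∀ x y z : A, m (α x) (m y z) = m (m x y) (α z))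
    (e : A) (he₁ : ∀ x : A, m e x = x) (he₂ : ∀ x : A, m x e = x) :
    (∀ x y : A, α (m x y) = m (α x) y ∧ α (m x y) = m x (α y)) ∧
    (∀ x y z : A,
      m (α x) (m y z) = α (m x (m y z)) ∧
      α (m x (m y z)) = m (m x y) (α z)) := by
  have alpha_mul_left := hom_assoc_alpha_apply_mul_eq_alpha_mul hassoc he₁ he₂
  refine ⟨fun x y => ⟨alpha_mul_left x y,
    hom_assoc_alpha_apply_mul_eq_mul_alpha hassoc he₁ he₂ x y⟩, fun x y z => ?_⟩
  exact ⟨(alpha_mul_left x (m y z)).symm, (alpha_mul_left x (m y z)).trans (hassoc x y z)⟩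
end

section
/- Let (A, m) be an associative algebra and α an element of its centroid, i.e., α(m(x,y)) = m(α(x), y) = m(x, α(y)) for all x,y. Define m₁(x,y) = m(α(x), y). Then (A, m₁, α) is a hom-associative algebra: m₁(α(x), m₁(y,z)) = m₁(m₁(x,y), α(z)) for all x,y,z. -/
/-- For α in the centroid of an associative algebra, m₁(x,y) = m(α x, y)
gives a hom-associative algebra (A, m₁, α). -/
theorem centroid_twist_one
    {R A : Type*} [CommRing R] [AddCommGroup A] [Module R A]
    (m : A →ₗ[R] A →ₗ[R] A) (α : A →ₗ[R] A)
    (hassoc : ∀ x y z : A, m x (m y z) = m (m x y) z)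
    (hcent₁ : ∀ x y : A, α (m x y) = m (α x) y)
    (hcent₂ : ∀ x y : A, α (m x y) = m x (α y)) :
    ∀ x y z : A,
      m (α (α x)) (m (α y) z) = m (α (m (α x) y)) (α z) := by
  intro x y z
  -- Slide α from y to z through the centroid, reassociate, then absorb α into the left factor.
  calc m (α (α x)) (m (α y) z)
      = m (α (α x)) (m y (α z)) := by rw [← hcent₁ y z, hcent₂]
    _ = m (m (α (α x)) y) (α z) := hassoc _ _ _
    _ = m (α (m (α x) y)) (α z) := by rw [hcent₁]
end

section
/- Let (A, m) be an associative algebra and α an element of its centroid. Define m₂(x,y) = m(α(x), α(y)). Then (A, m₂, α) is a hom-associative algebra: m₂(α(x), m₂(y,z)) = m₂(m₂(x,y), α(z)) for all x,y,z. -/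
/-- For α in the centroid of an associative algebra, m₂(x,y) = m(α x, α y)
gives a hom-associative algebra (A, m₂, α). -/
theorem centroid_twist_two
    {R A : Type*} [CommRing R] [AddCommGroup A] [Module R A]
    (m : A →ₗ[R] A →ₗ[R] A) (α : A →ₗ[R] A)
    (hassoc : ∀ x y z : A, m x (m y z) = m (m x y) z)
    (hcent₁ : ∀ x y : A, α (m x y) = m (α x) y)
    (hcent₂ : ∀ x y : A, α (m x y) = m x (α y)) :
    ∀ x y z : A,
      m (α (α x)) (α (m (α y) (α z))) = m (α (m (α x) (α y))) (α (α z)) := by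
  intro x y z
  calc m (α (α x)) (α (m (α y) (α z)))
      = m (α (α x)) (m (α y) (α (α z))) := by rw [hcent₂]
    _ = m (m (α (α x)) (α y)) (α (α z)) := hassoc _ _ _
    _ = m (α (m (α x) (α y))) (α (α z)) := by rw [hcent₁]
end

section
/- Every hom-associative algebra is hom-Lie-admissible: if (A, m, α) is hom-associative and b(x,y) := m(x,y) − m(y,x), then (A, b, α) satisfies b(x,x) = 0 and the hom-Jacobi identity b(α(x), b(y,z)) + b(α(y), b(z,x)) + b(α(z), b(x,y)) = 0 for all x,y,z ∈ A. -/
/-!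
The hom-Jacobiator of the commutator bracket is an alternating sum, over the six orderings of
`x, y, z`, of the hom-associators `(x y) α(z) - α(x) (y z)`. This identity holds in every
hom-algebra, so in a hom-associative one the hom-Jacobiator vanishes.
-/

namespace HomAlgebra

variable {R A : Type*} [CommSemiring R] [AddCommGroup A] [Module R A]
  (m : A →ₗ[R] A →ₗ[R] A) (α : A → A)

def homAssociator (x y z : A) : A := m (m x y) (α z) - m (α x) (m y z)

def commutator (x y : A) : A := m x y - m y x

theorem commutator_self (x : A) : commutator m x x = 0 := sub_self _

theorem homJacobi_commutator_eq (x y z : A) :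
    commutator m (α x) (commutator m y z) + commutator m (α y) (commutator m z x) +
        commutator m (α z) (commutator m x y) =
      (homAssociator m α y x z + homAssociator m α z y x + homAssociator m α x z y) -
        (homAssociator m α x y z + homAssociator m α z x y + homAssociator m α y z x) := by
  simp only [commutator, homAssociator, map_sub, LinearMap.sub_apply]
  abel

end HomAlgebra

/-- Every hom-associative algebra is hom-Lie admissible. -/
theorem hom_assoc_hom_lie_admissible
    {R A : Type*} [CommRing R] [AddCommGroup A] [Module R A]
    (m : A →ₗ[R] A →ₗ[R] A) (α : A →ₗ[R] A)
    (hassoc : ∀ x y z : A, m (α x) (m y z) = m (m x y) (α z))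
    (b : A → A → A) (hb : ∀ x y : A, b x y = m x y - m y x) :
    (∀ x : A, b x x = 0) ∧
    (∀ x y z : A, b (α x) (b y z) + b (α y) (b z x) + b (α z) (b x y) = 0) := by
  obtain rfl : b = HomAlgebra.commutator m := funext₂ hb
  have hassociator : ∀ x y z : A, HomAlgebra.homAssociator m α x y z = 0 :=
    fun x y z => sub_eq_zero.2 (hassoc x y z).symm
  refine ⟨HomAlgebra.commutator_self m, fun x y z => ?_⟩
  simp only [HomAlgebra.homJacobi_commutator_eq, hassociator, add_zero, sub_self]
end

section
/- Let K be a field and q ∈ K with 2 invertible in K. On the 3-dimensional vector space with basis e, f, h, define the skew-symmetric bracket by [h,f] = −2q·f, [h,e] = 2·e, [e,f] = (1/2)(1+q)·h, and the linear map α by α(e) = q·e, α(f) = q²·f, α(h) = q·h. Then (span{e,f,h}, [·,·], α) is a hom-Lie algebra: the bracket is alternating and satisfies the hom-Jacobi identity [α(x),[y,z]] + [α(y),[z,x]] + [α(z),[x,y]] = 0 for all x,y,z. -/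
/-!
Expanding in coordinates, every component of the hom-Jacobi sum is a cyclic sum of cubic
monomials. For a bracket with the shape of `sl₂` and a diagonal twist, the first two
components cancel identically, and the third is `c (p b + r a) det (x, y, z)`, where
`a, b, c` are the structure constants and `p, r` the twist on `e, f`. For the q-deformation,
`p b + r a = q · 2q + q² · (-2) = 0`.
-/

namespace Sl2Shape

variable {R : Type*} [CommRing R]

/-- The bracket with `[e, h] = a e`, `[f, h] = b f`, `[e, f] = c h` in the coordinates
`x = x₀ e + x₁ f + x₂ h`. -/
def bracket (a b c : R) (x y : Fin 3 → R) : Fin 3 → R :=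
  ![a * (x 0 * y 2 - x 2 * y 0), b * (x 1 * y 2 - x 2 * y 1), c * (x 0 * y 1 - x 1 * y 0)]

def diagTwist (p r s : R) (x : Fin 3 → R) : Fin 3 → R :=
  ![p * x 0, r * x 1, s * x 2]

theorem bracket_self (a b c : R) (x : Fin 3 → R) : bracket a b c x x = 0 := by
  ext i
  fin_cases i <;> simp [bracket, mul_comm]

theorem bracket_homJacobi (a b c p r s : R) (x y z : Fin 3 → R) :
    bracket a b c (diagTwist p r s x) (bracket a b c y z)
      + bracket a b c (diagTwist p r s y) (bracket a b c z x)
      + bracket a b c (diagTwist p r s z) (bracket a b c x y)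
      = ![0, 0, c * (p * b + r * a) * (Matrix.of ![x, y, z]).det] := by
  rw [Matrix.det_fin_three]
  ext i
  fin_cases i <;> simp [bracket, diagTwist] <;> ring

theorem bracket_homJacobi_eq_zero {a b c p r : R} (h : p * b + r * a = 0) (s : R)
    (x y z : Fin 3 → R) :
    bracket a b c (diagTwist p r s x) (bracket a b c y z)
      + bracket a b c (diagTwist p r s y) (bracket a b c z x)
      + bracket a b c (diagTwist p r s z) (bracket a b c x y) = 0 := by
  rw [bracket_homJacobi, h, mul_zero, zero_mul]
  ext i
  fin_cases i <;> rfl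

end Sl2Shape

open Sl2Shape in
theorem q_deformed_sl2_hom_lie_general
    {K : Type*} [Field K] (q : K)
    (br : (Fin 3 → K) → (Fin 3 → K) → (Fin 3 → K))
    (hbr : ∀ x y : Fin 3 → K, br x y =
      ![-2 * (x 0 * y 2 - x 2 * y 0),
        2 * q * (x 1 * y 2 - x 2 * y 1),
        (1/2) * (1 + q) * (x 0 * y 1 - x 1 * y 0)])
    (α : (Fin 3 → K) → (Fin 3 → K))
    (hα : ∀ x : Fin 3 → K, α x = ![q * x 0, q^2 * x 1, q * x 2]) :
    (∀ x : Fin 3 → K, br x x = 0) ∧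
    (∀ x y z : Fin 3 → K,
      br (α x) (br y z) + br (α y) (br z x) + br (α z) (br x y) = 0) := by
  obtain rfl : br = bracket (-2) (2 * q) ((1/2) * (1 + q)) := funext₂ hbr
  obtain rfl : α = diagTwist q (q ^ 2) q := funext hα
  exact ⟨bracket_self _ _ _, bracket_homJacobi_eq_zero (by ring) q⟩

/-- The q-deformed sl₂: coordinates x = x₀e + x₁f + x₂h, with
[h,f] = -2q f, [h,e] = 2e, [e,f] = ½(1+q)h and α(e)=qe, α(f)=q²f, α(h)=qh,
form a hom-Lie algebra. -/
theorem q_deformed_sl2_hom_lie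
    {K : Type*} [Field K] (q : K) (h2 : (2 : K) ≠ 0)
    (br : (Fin 3 → K) → (Fin 3 → K) → (Fin 3 → K))
    (hbr : ∀ x y : Fin 3 → K, br x y =
      ![-2 * (x 0 * y 2 - x 2 * y 0),
        2 * q * (x 1 * y 2 - x 2 * y 1),
        (1/2) * (1 + q) * (x 0 * y 1 - x 1 * y 0)])
    (α : (Fin 3 → K) → (Fin 3 → K))
    (hα : ∀ x : Fin 3 → K, α x = ![q * x 0, q^2 * x 1, q * x 2]) :
    (∀ x : Fin 3 → K, br x x = 0) ∧
    (∀ x y z : Fin 3 → K,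
      br (α x) (br y z) + br (α y) (br z x) + br (α z) (br x y) = 0) :=
  q_deformed_sl2_hom_lie_general q br hbr α hα
end

section
/- Let K be a field, a, b ∈ K, and A = K³ with basis e₁, e₂, e₃. Define a bilinear multiplication m by m(e₁,e₁)=a·e₁, m(e₂,e₂)=a·e₂, m(e₁,e₂)=m(e₂,e₁)=a·e₂, m(e₂,e₃)=b·e₃, m(e₁,e₃)=m(e₃,e₁)=b·e₃, m(e₃,e₂)=m(e₃,e₃)=0, and linear α by α(e₁)=a·e₁, α(e₂)=a·e₂, α(e₃)=b·e₃. Then (A, m, α) is a hom-associative algebra: m(α(x), m(y,z)) = m(m(x,y), α(z)) for all x,y,z ∈ A. -/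
/-- The 3-dimensional hom-associative algebra of Example 1: with the
multiplication m(e₁,e₁)=a e₁, m(e₂,e₂)=a e₂, m(e₁,e₂)=m(e₂,e₁)=a e₂,
m(e₂,e₃)=m(e₁,e₃)=m(e₃,e₁)=b e₃, m(e₃,e₂)=m(e₃,e₃)=0 and
α(e₁)=a e₁, α(e₂)=a e₂, α(e₃)=b e₃, one has hom-associativity. -/
theorem example_hom_associative
    {K : Type*} [Field K] (a b : K)
    (m : (Fin 3 → K) → (Fin 3 → K) → (Fin 3 → K))
    (hm : ∀ x y : Fin 3 → K, m x y =
      ![a * (x 0 * y 0),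
        a * (x 0 * y 1 + x 1 * y 0 + x 1 * y 1),
        b * (x 0 * y 2 + x 1 * y 2 + x 2 * y 0)])
    (α : (Fin 3 → K) → (Fin 3 → K))
    (hα : ∀ x : Fin 3 → K, α x = ![a * x 0, a * x 1, b * x 2]) :
    ∀ x y z : Fin 3 → K, m (α x) (m y z) = m (m x y) (α z) := by
  intro x y z
  ext i
  fin_cases i <;> simp only [hm, hα, Fin.isValue, Fin.zero_eta, Fin.mk_one, Fin.reduceFinMk,
    Matrix.cons_val] <;> ring
end

section
/- With the hom-associative algebra of the previous example (A = K³ with the multiplication m determined by m(e₁,e₁)=a·e₁ etc.), if a ≠ b and b ≠ 0 then m is not associative; specifically m(m(e₁,e₁), e₃) − m(e₁, m(e₁,e₃)) = (a−b)·b·e₃ ≠ 0. -/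
section HomAssocMul

variable {R : Type*} [CommRing R]

def homAssocMul (a b : R) (x y : Fin 3 → R) : Fin 3 → R :=
  ![a * (x 0 * y 0),
    a * (x 0 * y 1 + x 1 * y 0 + x 1 * y 1),
    b * (x 0 * y 2 + x 1 * y 2 + x 2 * y 0)]

variable (a b c : R)

theorem homAssocMul_e₁_e₁ : homAssocMul a b ![1,0,0] ![1,0,0] = a • ![1,0,0] := by
  ext i; fin_cases i <;> simp [homAssocMul]

theorem homAssocMul_smul_e₁_e₃ :
    homAssocMul a b (c • ![1,0,0]) ![0,0,1] = (b * c) • ![0,0,1] := by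
  ext i; fin_cases i <;> simp [homAssocMul]

theorem homAssocMul_e₁_smul_e₃ :
    homAssocMul a b ![1,0,0] (c • ![0,0,1]) = (b * c) • ![0,0,1] := by
  ext i; fin_cases i <;> simp [homAssocMul]

theorem homAssocMul_e₁_e₃ : homAssocMul a b ![1,0,0] ![0,0,1] = b • ![0,0,1] := by
  simpa using homAssocMul_smul_e₁_e₃ a b 1

end HomAssocMul

theorem e₃_ne_zero {R : Type*} [Semiring R] [Nontrivial R] : (![0,0,1] : Fin 3 → R) ≠ 0 :=
  fun h => one_ne_zero (congrFun h 2)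

/-- The hom-associative algebra of Example 1 is not associative when
a ≠ b and b ≠ 0. -/
theorem example_not_associative
    {K : Type*} [Field K] (a b : K) (hab : a ≠ b) (hb : b ≠ 0)
    (m : (Fin 3 → K) → (Fin 3 → K) → (Fin 3 → K))
    (hm : ∀ x y : Fin 3 → K, m x y =
      ![a * (x 0 * y 0),
        a * (x 0 * y 1 + x 1 * y 0 + x 1 * y 1),
        b * (x 0 * y 2 + x 1 * y 2 + x 2 * y 0)]) :
    m (m ![1,0,0] ![1,0,0]) ![0,0,1] - m ![1,0,0] (m ![1,0,0] ![0,0,1])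
        = ((a - b) * b) • (![0,0,1] : Fin 3 → K) ∧
    ((a - b) * b) • (![0,0,1] : Fin 3 → K) ≠ 0 := by
  obtain rfl : m = homAssocMul a b := funext fun x => funext (hm x)
  refine ⟨?_, smul_ne_zero (mul_ne_zero (sub_ne_zero.2 hab) hb) e₃_ne_zero⟩
  rw [homAssocMul_e₁_e₁, homAssocMul_e₁_e₃, homAssocMul_smul_e₁_e₃, homAssocMul_e₁_smul_e₃,
    ← sub_smul]
  congr 1
  ring
end
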